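/- Let p ≥ 3 be a real number and let u : ℝ³ × [0,∞) → ℝ be a C³ solution of ∂ₜ²u − Δu + |∂ₜu|^{p−1}∂ₜu = 0 that is radially symmetric in x and spatially compactly supported on compact time intervals, with radial profile f(r,t) = u(r e₁, t). Set M = max( sup_{r>0}|(∂ₜ + ∂ᵣ)(r ∂ₜf)(r,0)|, sup_{r>0}|(∂ₜ − ∂ᵣ)(r ∂ₜf)(r,0)| ). Then for all r > 0 and t ≥ 0: r|∂ₜ²f(r,t)| ≤ M, |∂ₜf(r,t)| ≤ M, and r|∂ᵣ∂ₜf(r,t)| ≤ 2M. -/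

import Mathlib

open MeasureTheory Set Real
open scoped ENNReal

noncomputable section

/-- Euclidean space ℝ³. -/
abbrev E3 : Type := EuclideanSpace ℝ (Fin 3)

/-- Time derivative ∂ₜ of a function of (x, t) ∈ ℝ³ × ℝ. -/
def pt (u : E3 × ℝ → ℝ) : E3 × ℝ → ℝ := fun z => fderiv ℝ u z ((0 : E3), (1 : ℝ))

/-- Spatial partial derivative ∂_{x i}. -/
def px (i : Fin 3) (u : E3 × ℝ → ℝ) : E3 × ℝ → ℝ :=
  fun z => fderiv ℝ u z (EuclideanSpace.single i 1, (0 : ℝ))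

/-- Spatial Laplacian Δ (in the x variables). -/
def lap (u : E3 × ℝ → ℝ) : E3 × ℝ → ℝ := fun z => ∑ i : Fin 3, px i (px i u) z

/-- `u` is spatially compactly supported on compact time intervals. -/
def SpatialCptSupp (u : E3 × ℝ → ℝ) : Prop :=
  ∀ T : ℝ, 0 < T → ∃ R > (0 : ℝ), ∀ (x : E3) (t : ℝ),
    R ≤ ‖x‖ → 0 ≤ t → t ≤ T → u (x, t) = 0

/-- `u` is radially symmetric in `x` (for nonnegative times). -/
def RadialIn (u : E3 × ℝ → ℝ) : Prop :=
  ∀ (x y : E3) (t : ℝ), 0 ≤ t → ‖x‖ = ‖y‖ → u (x, t) = u (y, t)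

/-- Partial derivative in the first variable of a function on ℝ × ℝ. -/
def d1 (g : ℝ × ℝ → ℝ) : ℝ × ℝ → ℝ := fun z => fderiv ℝ g z ((1 : ℝ), (0 : ℝ))

/-- Partial derivative in the second variable of a function on ℝ × ℝ. -/
def d2 (g : ℝ × ℝ → ℝ) : ℝ × ℝ → ℝ := fun z => fderiv ℝ g z ((0 : ℝ), (1 : ℝ))

/-- A fixed unit vector in ℝ³. -/
def e1 : E3 := EuclideanSpace.single 0 1

/-- The radial profile `f(r, t) = u(r e₁, t)` of a function on ℝ³ × ℝ. -/
def prof (u : E3 × ℝ → ℝ) : ℝ × ℝ → ℝ := fun z => u (z.1 • e1, z.2)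

/-- `X₊(r,t) = (∂ₜ + ∂ᵣ)(r ∂ₜ f(r,t))` for the radial profile `f` of `u`. -/
def Xplus (u : E3 × ℝ → ℝ) : ℝ × ℝ → ℝ := fun z =>
  d2 (fun w : ℝ × ℝ => w.1 * d2 (prof u) w) z + d1 (fun w : ℝ × ℝ => w.1 * d2 (prof u) w) z

/-- `X₋(r,t) = (∂ₜ − ∂ᵣ)(r ∂ₜ f(r,t))` for the radial profile `f` of `u`. -/
def Xminus (u : E3 × ℝ → ℝ) : ℝ × ℝ → ℝ := fun z =>
  d2 (fun w : ℝ × ℝ => w.1 * d2 (prof u) w) z - d1 (fun w : ℝ × ℝ => w.1 * d2 (prof u) w) z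

/-!
With `w = r ∂ₜf`, differentiating the radial equation in `t` gives the one-dimensional damped
wave equation `∂ₜ²w - ∂ᵣ²w = -p |∂ₜf|^(p-1) ∂ₜw`, which persists for the odd extension of `w`
to `r < 0`. Since `X₊(-r, t) = -X₋(r, t)`, this says that along the characteristics
`r + t = const` the quantity `X₊ = ∂ₜw + ∂ᵣw` obeys `(∂ₜ - ∂ᵣ) X₊ = -½ p |∂ₜf|^(p-1) (X₊(r, t) -
X₊(-r, t))`. With an integrating factor, `|X₊|` can then never exceed its initial supremum `M`
(by compact support `|X₊|` attains its maximum on each time strip). Hence `|∂ₜw|, |∂ᵣw| ≤ M`;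
as `w(0, t) = 0` the mean value theorem gives `|∂ₜf| ≤ M`, and the remaining two bounds follow
from `∂ₜw = r ∂ₜ²f` and `∂ᵣw = ∂ₜf + r ∂ᵣ∂ₜf`.
-/

open Filter Topology

theorem ContDiff.fderiv_apply_const {E : Type*} [NormedAddCommGroup E] [NormedSpace ℝ E]
    {f : E → ℝ} {m n : WithTop ℕ∞} (hf : ContDiff ℝ n f) (hmn : m + 1 ≤ n) (v : E) :
    ContDiff ℝ m (fun z => fderiv ℝ f z v) :=
  (hf.fderiv_right hmn).clm_apply contDiff_const

theorem HasDerivAt.unique_of_eventuallyEq_nhdsGE {f h : ℝ → ℝ} {a b t : ℝ}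
    (hf : HasDerivAt f a t) (hh : HasDerivAt h b t) (he : f =ᶠ[𝓝[≥] t] h) : a = b :=
  (uniqueDiffWithinAt_Ici t).eq_deriv _
    (hf.hasDerivWithinAt.congr_of_eventuallyEq he.symm (he.self_of_nhdsWithin self_mem_Ici).symm)
    hh.hasDerivWithinAt

theorem hasDerivAt_mul_of_continuousAt {G : ℝ → ℝ} (hG : ContinuousAt G 0) :
    HasDerivAt (fun c => c * G c) (G 0) 0 := by
  rw [hasDerivAt_iff_tendsto_slope]
  refine (hG.tendsto.mono_left nhdsWithin_le_nhds).congr' ?_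
  filter_upwards [self_mem_nhdsWithin] with c hc
  rw [slope_def_field]
  field_simp [show c ≠ 0 from hc]
  ring

/-- `exp (∫ β) * (C - φ)` is nondecreasing while `q ≤ C`. -/
theorem lt_of_hasDerivAt_eq_neg_mul_sub {φ q β : ℝ → ℝ} {T C : ℝ} (hT : 0 ≤ T)
    (hβ : Continuous β) (hβ0 : ∀ s ∈ Ioo 0 T, 0 ≤ β s) (hφ : ContinuousOn φ (Icc 0 T))
    (hφ' : ∀ s ∈ Ioo 0 T, HasDerivAt φ (-(β s * (φ s - q s))) s)
    (hq : ∀ s ∈ Ioo 0 T, q s ≤ C) (h0 : φ 0 < C) : φ T < C := by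
  set A : ℝ → ℝ := fun s => ∫ τ in (0 : ℝ)..s, β τ
  have hA : ∀ s, HasDerivAt A (β s) s := fun s =>
    (hβ.integral_hasStrictDerivAt 0 s).hasDerivAt
  set ψ : ℝ → ℝ := fun s => exp (A s) * (C - φ s)
  have hψ' : ∀ s ∈ Ioo 0 T, HasDerivAt ψ (exp (A s) * (β s * (C - q s))) s := fun s hs =>
    ((hA s).exp.mul ((hφ' s hs).const_sub C)).congr_deriv (by ring)
  have hψ : ContinuousOn ψ (Icc 0 T) :=
    (continuous_exp.comp (continuous_iff_continuousAt.2 fun s => (hA s).continuousAt)).continuousOn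
      |>.mul (continuousOn_const.sub hφ)
  have hmono : MonotoneOn ψ (Icc 0 T) := by
    refine monotoneOn_of_deriv_nonneg (convex_Icc 0 T) hψ (fun s hs => ?_) fun s hs => ?_
    · rw [interior_Icc] at hs
      exact (hψ' s hs).differentiableAt.differentiableWithinAt
    · rw [interior_Icc] at hs
      rw [(hψ' s hs).deriv]
      have := sub_nonneg.2 (hq s hs)
      have := hβ0 s hs
      positivity
  have hψT : ψ 0 ≤ ψ T := hmono ⟨le_rfl, hT⟩ ⟨hT, le_rfl⟩ hT
  have hψ0 : ψ 0 = C - φ 0 := by simp [ψ, A]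
  have : 0 < exp (A T) * (C - φ T) := by
    change 0 < ψ T
    linarith
  exact sub_pos.1 (pos_of_mul_pos_right this (exp_pos _).le)

theorem abs_lt_of_hasDerivAt_eq_neg_mul_sub {φ q β : ℝ → ℝ} {T C : ℝ} (hT : 0 ≤ T)
    (hβ : Continuous β) (hβ0 : ∀ s ∈ Ioo 0 T, 0 ≤ β s) (hφ : ContinuousOn φ (Icc 0 T))
    (hφ' : ∀ s ∈ Ioo 0 T, HasDerivAt φ (-(β s * (φ s - q s))) s)
    (hq : ∀ s ∈ Ioo 0 T, |q s| ≤ C) (h0 : |φ 0| < C) : |φ T| < C := by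
  refine abs_lt.2 ⟨neg_lt.1 ?_, ?_⟩
  · refine lt_of_hasDerivAt_eq_neg_mul_sub (φ := fun s => -φ s) (q := fun s => -q s) hT hβ hβ0
      hφ.neg (fun s hs => ((hφ' s hs).neg).congr_deriv (by ring)) (fun s hs => ?_)
      (neg_lt.1 (abs_lt.1 h0).1)
    exact neg_le.1 (abs_le.1 (hq s hs)).1
  · exact lt_of_hasDerivAt_eq_neg_mul_sub hT hβ hβ0 hφ hφ' (fun s hs => (abs_le.1 (hq s hs)).2)
      (abs_lt.1 h0).2

section PlaneCalculus

variable {g h : ℝ × ℝ → ℝ}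

theorem ContDiff.d1 {m n : WithTop ℕ∞} (hg : ContDiff ℝ n g) (hmn : m + 1 ≤ n) :
    ContDiff ℝ m (d1 g) :=
  hg.fderiv_apply_const hmn _

theorem ContDiff.d2 {m n : WithTop ℕ∞} (hg : ContDiff ℝ n g) (hmn : m + 1 ≤ n) :
    ContDiff ℝ m (d2 g) :=
  hg.fderiv_apply_const hmn _

theorem hasDerivAt_d1 {r t : ℝ} (hg : DifferentiableAt ℝ g (r, t)) :
    HasDerivAt (fun ρ => g (ρ, t)) (d1 g (r, t)) r :=
  hg.hasFDerivAt.comp_hasDerivAt r ((hasDerivAt_id r).prodMk (hasDerivAt_const r t))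

theorem hasDerivAt_d2 {r t : ℝ} (hg : DifferentiableAt ℝ g (r, t)) :
    HasDerivAt (fun τ => g (r, τ)) (d2 g (r, t)) t :=
  hg.hasFDerivAt.comp_hasDerivAt t ((hasDerivAt_const t r).prodMk (hasDerivAt_id t))

theorem hasDerivAt_d2_sub_d1 {c s : ℝ} (hg : DifferentiableAt ℝ g (c - s, s)) :
    HasDerivAt (fun σ => g (c - σ, σ)) (d2 g (c - s, s) - d1 g (c - s, s)) s := by
  have hγ : HasDerivAt (fun σ : ℝ => (c - σ, σ)) ((0, 1) - (1, 0) : ℝ × ℝ) s := by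
    simpa using ((hasDerivAt_id s).const_sub c).prodMk (hasDerivAt_id s)
  have := hg.hasFDerivAt.comp_hasDerivAt (f := fun σ : ℝ => (c - σ, σ)) s hγ
  rwa [map_sub] at this

theorem d1_add {z : ℝ × ℝ} (hg : DifferentiableAt ℝ g z) (hh : DifferentiableAt ℝ h z) :
    d1 (fun w => g w + h w) z = d1 g z + d1 h z := by
  simp only [d1, fderiv_fun_add hg hh, add_apply]

theorem d2_add {z : ℝ × ℝ} (hg : DifferentiableAt ℝ g z) (hh : DifferentiableAt ℝ h z) :
    d2 (fun w => g w + h w) z = d2 g z + d2 h z := by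
  simp only [d2, fderiv_fun_add hg hh, add_apply]

theorem d1_fst_mul {z : ℝ × ℝ} (hg : DifferentiableAt ℝ g z) :
    d1 (fun w => w.1 * g w) z = g z + z.1 * d1 g z := by
  simp only [d1, fderiv_fun_mul differentiableAt_fst hg, fderiv_fst,
    add_apply, smul_apply, ContinuousLinearMap.coe_fst', smul_eq_mul]
  ring

theorem d2_fst_mul {z : ℝ × ℝ} (hg : DifferentiableAt ℝ g z) :
    d2 (fun w => w.1 * g w) z = z.1 * d2 g z := by
  simp only [d2, fderiv_fun_mul differentiableAt_fst hg, fderiv_fst,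
    add_apply, smul_apply, ContinuousLinearMap.coe_fst', smul_eq_mul]
  ring

theorem d1_d2_comm (hg : ContDiff ℝ 2 g) : d1 (d2 g) = d2 (d1 g) := by
  funext z
  have hdiff : DifferentiableAt ℝ (fderiv ℝ g) z :=
    ((hg.fderiv_right (m := 1) le_rfl).differentiable one_ne_zero) z
  have hsymm : IsSymmSndFDerivAt ℝ g z := hg.contDiffAt.isSymmSndFDerivAt (by simp)
  have key : ∀ v w : ℝ × ℝ, fderiv ℝ (fun y => fderiv ℝ g y v) z w
      = fderiv ℝ (fderiv ℝ g) z w v := fun v w => by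
    rw [fderiv_clm_apply hdiff (differentiableAt_const v)]
    simp
  change fderiv ℝ (fun y => fderiv ℝ g y (0, 1)) z (1, 0)
    = fderiv ℝ (fun y => fderiv ℝ g y (1, 0)) z (0, 1)
  rw [key, key, hsymm.eq]

theorem d2_sub_d1_of_d2_add_d1 (hg : ContDiff ℝ 2 g) (z : ℝ × ℝ) :
    d2 (fun w => d2 g w + d1 g w) z - d1 (fun w => d2 g w + d1 g w) z
      = d2 (d2 g) z - d1 (d1 g) z := by
  have h2 := (hg.d2 (m := 1) le_rfl).differentiable one_ne_zero z
  have h1 := (hg.d1 (m := 1) le_rfl).differentiable one_ne_zero z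
  rw [d1_add h2 h1, d2_add h2 h1, d1_d2_comm hg]
  ring

theorem abs_le_mul_of_abs_d1_le (hg : Differentiable ℝ g) {M r t : ℝ}
    (hr : 0 ≤ r) (h0 : g (0, t) = 0) (hd : ∀ ρ, |d1 g (ρ, t)| ≤ M) : |g (r, t)| ≤ M * r := by
  have := norm_image_sub_le_of_norm_deriv_le_segment' (f := fun ρ => g (ρ, t))
    (fun ρ _ => (hasDerivAt_d1 (hg (ρ, t))).hasDerivWithinAt) (fun ρ _ => hd ρ) r ⟨hr, le_rfl⟩
  simpa [h0] using this

def VanishesOutside (R T : ℝ) (g : ℝ × ℝ → ℝ) : Prop :=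
  ∀ r t, R < |r| → t ∈ Ico 0 T → g (r, t) = 0

namespace VanishesOutside

variable {R T : ℝ}

theorem d1 (hv : VanishesOutside R T g) (hg : Differentiable ℝ g) :
    VanishesOutside R T (_root_.d1 g) := fun r t hr ht =>
  (hasDerivAt_d1 (hg (r, t))).unique <| (hasDerivAt_const r 0).congr_of_eventuallyEq <|
    ((continuous_abs.tendsto r).eventually (lt_mem_nhds hr)).mono fun _ hρ => hv _ _ hρ ht

theorem d2 (hv : VanishesOutside R T g) (hg : Differentiable ℝ g) :
    VanishesOutside R T (_root_.d2 g) := fun r t hr ht =>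
  (hasDerivAt_d2 (hg (r, t))).unique_of_eventuallyEq_nhdsGE (hasDerivAt_const t 0) <|
    mem_of_superset (Ico_mem_nhdsGE ht.2) fun _ hτ => hv _ _ hr ⟨ht.1.trans hτ.1, hτ.2⟩

theorem bddAbove_range_abs (hvan : VanishesOutside R T g) (hT : 0 < T) (hg : Continuous g) :
    BddAbove (range fun r : Ioi (0 : ℝ) => |g (r, 0)|) := by
  have hcs : HasCompactSupport fun r => g (r, 0) :=
    HasCompactSupport.intro (isCompact_Icc (a := -|R|) (b := |R|)) fun r hr =>
      hvan r 0 ((le_abs_self R).trans_lt (not_le.1 fun h => hr (abs_le.1 h))) ⟨le_rfl, hT⟩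
  refine ((hg.comp (continuous_id.prodMk continuous_const)).norm.bddAbove_range_of_hasCompactSupport
    hcs.norm).mono ?_
  rintro _ ⟨r, rfl⟩
  exact ⟨r, rfl⟩

end VanishesOutside

def ReflParity (s : ℝ) (g : ℝ × ℝ → ℝ) : Prop :=
  ∀ r t, 0 ≤ t → g (-r, t) = s * g (r, t)

namespace ReflParity

variable {s : ℝ}

theorem d1 (hp : ReflParity s g) (hg : Differentiable ℝ g) : ReflParity (-s) (_root_.d1 g) := by
  intro r t ht
  have hrefl : HasDerivAt (fun ρ => s * g (-ρ, t)) (s * (_root_.d1 g (r, t) * -1)) (-r) := by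
    have hd : HasDerivAt (fun ρ => g (ρ, t)) (_root_.d1 g (r, t)) (- -r) := by
      simpa only [neg_neg] using hasDerivAt_d1 (hg (r, t))
    exact (hd.comp (-r) (hasDerivAt_neg (-r))).const_mul s
  have heq : (fun ρ => g (ρ, t)) = fun ρ => s * g (-ρ, t) :=
    funext fun ρ => by simpa only [neg_neg] using hp (-ρ) t ht
  rw [(hasDerivAt_d1 (hg (-r, t))).unique (heq ▸ hrefl)]
  ring

theorem d2 (hp : ReflParity s g) (hg : Differentiable ℝ g) : ReflParity s (_root_.d2 g) :=
  fun r t ht => (hasDerivAt_d2 (hg (-r, t))).unique_of_eventuallyEq_nhdsGE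
    ((hasDerivAt_d2 (hg (r, t))).const_mul s)
    (eventually_mem_nhdsWithin.mono fun _ hτ => hp r _ (ht.trans hτ))

theorem apply_zero (hp : ReflParity (-1) g) {t : ℝ} (ht : 0 ≤ t) : g (0, t) = 0 := by
  have := hp 0 t ht
  rw [neg_zero] at this
  linarith

end ReflParity

end PlaneCalculus

/-- If the maximum of `|X|` over a time strip exceeded the initial bound, it would be attained
at a positive time, and the comparison principle along the characteristic through that point
rules this out. -/
theorem abs_le_of_transport {X b : ℝ × ℝ → ℝ} {R T M : ℝ} (hX : ContDiff ℝ 1 X)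
    (hb : Continuous b) (hb0 : ∀ z, 0 ≤ b z) (hvan : VanishesOutside R T X)
    (htr : ∀ r t, t ∈ Ioo 0 T →
      d2 X (r, t) - d1 X (r, t) = -(b (r, t) * (X (r, t) - X (-r, t))))
    (h0 : ∀ r, |X (r, 0)| ≤ M) {r t : ℝ} (ht : t ∈ Ico 0 T) : |X (r, t)| ≤ M := by
  have hXc : Continuous X := hX.continuous
  obtain ⟨z, hzK, hzmax⟩ := (isCompact_Icc.prod isCompact_Icc).exists_isMaxOn
    (⟨(0, 0), ⟨by simp, by simp [ht.1]⟩⟩ : (Icc (-|R|) |R| ×ˢ Icc 0 t).Nonempty)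
    (continuous_abs.comp hXc).continuousOn
  set C := |X z|
  have hC : ∀ ρ σ, σ ∈ Icc 0 t → |X (ρ, σ)| ≤ C := fun ρ σ hσ => by
    rcases le_or_gt |ρ| |R| with hρ | hρ
    · exact hzmax ⟨abs_le.1 hρ, hσ⟩
    · rw [hvan ρ σ ((le_abs_self R).trans_lt hρ) ⟨hσ.1, hσ.2.trans_lt ht.2⟩, abs_zero]
      exact abs_nonneg _
  refine (hC r t ⟨ht.1, le_rfl⟩).trans (not_lt.1 fun hMC => ?_)
  obtain ⟨r₀, t₀⟩ := z
  have ht₀ : 0 < t₀ := hzK.2.1.lt_of_ne fun h => by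
    subst h
    exact (h0 r₀).not_gt hMC
  have key := abs_lt_of_hasDerivAt_eq_neg_mul_sub (φ := fun s => X (r₀ + t₀ - s, s))
    (q := fun s => X (-(r₀ + t₀ - s), s)) (β := fun s => b (r₀ + t₀ - s, s)) (C := C) ht₀.le
    (hb.comp ((continuous_const.sub continuous_id).prodMk continuous_id))
    (fun s _ => hb0 _)
    (hXc.comp ((continuous_const.sub continuous_id).prodMk continuous_id)).continuousOn
    (fun s hs => by
      have hd := hasDerivAt_d2_sub_d1 (c := r₀ + t₀)
        (hX.differentiable one_ne_zero (r₀ + t₀ - s, s))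
      rwa [htr _ _ ⟨hs.1, hs.2.trans_le (hzK.2.2.trans_lt ht.2).le⟩] at hd)
    (fun s hs => hC _ _ ⟨hs.1.le, hs.2.le.trans hzK.2.2⟩)
    ((h0 _).trans_lt hMC)
  simp only [add_sub_cancel_right] at key
  exact key.false

section Radial

variable {u : E3 × ℝ → ℝ}

theorem ContDiff.prof {n : WithTop ℕ∞} (hu : ContDiff ℝ n u) : ContDiff ℝ n (prof u) :=
  hu.comp (by fun_prop)

theorem ContDiff.px {m n : WithTop ℕ∞} (hu : ContDiff ℝ n u) (hmn : m + 1 ≤ n) (i : Fin 3) :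
    ContDiff ℝ m (px i u) :=
  hu.fderiv_apply_const hmn _

theorem ContDiff.pt {m n : WithTop ℕ∞} (hu : ContDiff ℝ n u) (hmn : m + 1 ≤ n) :
    ContDiff ℝ m (pt u) :=
  hu.fderiv_apply_const hmn _

theorem fderiv_prof_apply (hu : Differentiable ℝ u) (z w : ℝ × ℝ) :
    fderiv ℝ (prof u) z w = fderiv ℝ u (z.1 • e1, z.2) (w.1 • e1, w.2) := by
  set L : ℝ × ℝ →L[ℝ] E3 × ℝ :=
    ((ContinuousLinearMap.fst ℝ ℝ ℝ).smulRight e1).prod (ContinuousLinearMap.snd ℝ ℝ ℝ)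
  change fderiv ℝ (u ∘ L) z w = _
  rw [((hu _).hasFDerivAt.comp z L.hasFDerivAt).fderiv]
  rfl

theorem d1_prof (hu : Differentiable ℝ u) : d1 (prof u) = prof (px 0 u) := by
  funext z
  simp [d1, fderiv_prof_apply hu, px, prof, e1]

theorem d2_prof (hu : Differentiable ℝ u) : d2 (prof u) = prof (pt u) := by
  funext z
  simp [d2, fderiv_prof_apply hu, pt, prof]

theorem norm_smul_e1 (r : ℝ) : ‖r • e1‖ = |r| := by
  simp [norm_smul, e1]

theorem norm_smul_e1_add_smul_single (r c : ℝ) {i : Fin 3} (hi : i ≠ 0) :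
    ‖r • e1 + c • EuclideanSpace.single i (1 : ℝ)‖ = √(r ^ 2 + c ^ 2) := by
  rw [EuclideanSpace.norm_eq]
  congr 1
  fin_cases i
  · exact absurd rfl hi
  all_goals simp [Fin.sum_univ_three, e1, sq_abs]

theorem reflParity_prof (hrad : RadialIn u) : ReflParity 1 (prof u) := fun r t ht => by
  rw [one_mul]
  exact hrad _ _ _ ht (by rw [norm_smul_e1, norm_smul_e1, abs_neg])

theorem hasDerivAt_sqrt_sq_add_sq {r : ℝ} (hr : r ≠ 0) (c : ℝ) :
    HasDerivAt (fun c => √(r ^ 2 + c ^ 2)) (c / √(r ^ 2 + c ^ 2)) c := by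
  have hpos : 0 < r ^ 2 + c ^ 2 := by positivity
  refine (((hasDerivAt_pow 2 c).const_add (r ^ 2)).sqrt hpos.ne').congr_deriv ?_
  field_simp
  ring

theorem hasDerivAt_px_line (hu : Differentiable ℝ u) (i : Fin 3) (x : E3) (t s : ℝ) :
    HasDerivAt (fun c : ℝ => u (x + c • EuclideanSpace.single i 1, t))
      (px i u (x + s • EuclideanSpace.single i 1, t)) s := by
  have hγ : HasDerivAt (fun c : ℝ => (x + c • EuclideanSpace.single i (1 : ℝ), t))
      ((EuclideanSpace.single i 1, 0) : E3 × ℝ) s :=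
    (by simpa using ((hasDerivAt_id s).smul_const (EuclideanSpace.single i (1 : ℝ))).const_add x :
      HasDerivAt (fun c : ℝ => x + c • EuclideanSpace.single i (1 : ℝ)) _ s).prodMk
      (hasDerivAt_const s t)
  exact (hu _).hasFDerivAt.comp_hasDerivAt s hγ

/-- In a direction orthogonal to `x = r e₁`, `|x + c v| = √(r² + c²)`, so
`∂ᵥu = c ∂ᵣf(√(r² + c²)) / √(r² + c²)`, whose derivative at `c = 0` is `∂ᵣf(r) / r`. -/
theorem px_px_of_radial (hu : ContDiff ℝ 2 u) (hrad : RadialIn u) {i : Fin 3} (hi : i ≠ 0)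
    {r t : ℝ} (hr : 0 < r) (ht : 0 ≤ t) :
    px i (px i u) (r • e1, t) = d1 (prof u) (r, t) / r := by
  have hu1 : Differentiable ℝ u := hu.differentiable two_ne_zero
  have hF : Differentiable ℝ (prof u) := hu.prof.differentiable two_ne_zero
  set ρ : ℝ → ℝ := fun c => √(r ^ 2 + c ^ 2)
  have hρ0 : ρ 0 = r := by simp [ρ, hr.le]
  have hfirst : ∀ c, px i u (r • e1 + c • EuclideanSpace.single i 1, t)
      = c * (d1 (prof u) (ρ c, t) / ρ c) := fun c => by
    have hline := hasDerivAt_px_line hu1 i (r • e1) t c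
    have hrad' : (fun c : ℝ => u (r • e1 + c • EuclideanSpace.single i 1, t))
        = fun c => prof u (ρ c, t) := funext fun c => hrad _ _ _ ht <| by
      rw [norm_smul_e1_add_smul_single r c hi, norm_smul_e1,
        abs_of_nonneg (sqrt_nonneg _)]
    rw [hrad'] at hline
    rw [hline.unique ((hasDerivAt_d1 (hF _)).comp c (hasDerivAt_sqrt_sq_add_sq hr.ne' c))]
    ring
  have hsecond := hasDerivAt_px_line ((hu.px (m := 1) le_rfl i).differentiable one_ne_zero) i
    (r • e1) t 0
  simp only [zero_smul, add_zero, funext hfirst] at hsecond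
  have hcont : ContinuousAt (fun c => d1 (prof u) (ρ c, t) / ρ c) 0 := by
    have hρc : Continuous ρ := by fun_prop
    refine ContinuousAt.div ?_ hρc.continuousAt (by rw [hρ0]; exact hr.ne')
    exact ((hu.prof.d1 (m := 1) le_rfl).continuous.comp
      (hρc.prodMk continuous_const)).continuousAt
  rw [hsecond.unique (hasDerivAt_mul_of_continuousAt hcont), hρ0]

theorem lap_of_radial (hu : ContDiff ℝ 2 u) (hrad : RadialIn u) {r t : ℝ} (hr : 0 < r)
    (ht : 0 ≤ t) :
    lap u (r • e1, t) = d1 (d1 (prof u)) (r, t) + 2 / r * d1 (prof u) (r, t) := by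
  have hu1 : Differentiable ℝ u := hu.differentiable two_ne_zero
  have hpx : Differentiable ℝ (px 0 u) := (hu.px (m := 1) le_rfl 0).differentiable one_ne_zero
  rw [lap, Fin.sum_univ_three, px_px_of_radial (i := 1) hu hrad (by decide) hr ht,
    px_px_of_radial (i := 2) hu hrad (by decide) hr ht, d1_prof hu1, d1_prof hpx]
  simp only [prof]
  ring

end Radial

/-- For `p ≥ 3` the nonlinearity is `(y²)^((p-1)/2) y` with exponent `(p-1)/2 ≥ 1`, which is
differentiable also at `y = 0`. -/
theorem hasDerivAt_abs_rpow_mul_self {p : ℝ} (hp : 3 ≤ p) (y : ℝ) :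
    HasDerivAt (fun y : ℝ => |y| ^ (p - 1) * y) (p * |y| ^ (p - 1)) y := by
  have hsq : ∀ x : ℝ, |x| ^ (p - 1) = (x ^ 2) ^ ((p - 1) / 2) := fun x => by
    rw [← sq_abs, ← rpow_natCast, ← rpow_mul (abs_nonneg x)]
    congr 1
    push_cast
    ring
  simp_rw [hsq]
  refine ((((hasDerivAt_pow 2 y).rpow_const (p := (p - 1) / 2) (Or.inr (by linarith))).mul
    (hasDerivAt_id y))).congr_deriv ?_
  have hpow : (y ^ 2) ^ ((p - 1) / 2 - 1) * y ^ 2 = (y ^ 2) ^ ((p - 1) / 2) := by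
    rw [← rpow_add_one' (sq_nonneg y) (by linarith)]
    ring_nf
  simp only [id, Nat.cast_ofNat]
  linear_combination (p - 1) * hpow

section DampedWave

variable {p : ℝ} {u : E3 × ℝ → ℝ}

def SolvesDampedWave (p : ℝ) (u : E3 × ℝ → ℝ) : Prop :=
  ∀ (x : E3) (t : ℝ), 0 ≤ t →
    pt (pt u) (x, t) - lap u (x, t) + |pt u (x, t)| ^ (p - 1) * pt u (x, t) = 0

/-- `Xplus u = ∂ₜw + ∂ᵣw` and `Xminus u = ∂ₜw - ∂ᵣw` for this `w = r ∂ₜf`. -/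
def scaledVel (u : E3 × ℝ → ℝ) : ℝ × ℝ → ℝ := fun z => z.1 * d2 (prof u) z

theorem ContDiff.scaledVel (hu : ContDiff ℝ 3 u) : ContDiff ℝ 2 (scaledVel u) :=
  contDiff_fst.mul (hu.prof.d2 le_rfl)

theorem d2_scaledVel (hu : ContDiff ℝ 2 u) (z : ℝ × ℝ) :
    d2 (scaledVel u) z = z.1 * d2 (d2 (prof u)) z :=
  d2_fst_mul ((hu.prof.d2 le_rfl).differentiable one_ne_zero z)

theorem d1_scaledVel (hu : ContDiff ℝ 2 u) (z : ℝ × ℝ) :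
    d1 (scaledVel u) z = d2 (prof u) z + z.1 * d1 (d2 (prof u)) z :=
  d1_fst_mul ((hu.prof.d2 le_rfl).differentiable one_ne_zero z)

theorem SolvesDampedWave.prof_eq (hsol : SolvesDampedWave p u) (hu : ContDiff ℝ 2 u)
    (hrad : RadialIn u) {r t : ℝ} (hr : 0 < r) (ht : 0 ≤ t) :
    d2 (d2 (prof u)) (r, t) = d1 (d1 (prof u)) (r, t) + 2 / r * d1 (prof u) (r, t)
      - |d2 (prof u) (r, t)| ^ (p - 1) * d2 (prof u) (r, t) := by
  have h := hsol (r • e1) t ht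
  rw [lap_of_radial hu hrad hr ht] at h
  rw [d2_prof (hu.differentiable two_ne_zero),
    d2_prof ((hu.pt (m := 1) le_rfl).differentiable one_ne_zero)]
  simp only [prof] at h ⊢
  linarith

/-- Differentiating the radial equation in `t` turns it into a damped one-dimensional wave
equation for `w = r ∂ₜf`, since `∂ᵣ²(r g) = r (∂ᵣ² + (2/r) ∂ᵣ) g`. -/
theorem SolvesDampedWave.scaledVel_wave_of_pos (hsol : SolvesDampedWave p u) (hp : 3 ≤ p)
    (hu : ContDiff ℝ 3 u) (hrad : RadialIn u) {r t : ℝ} (hr : 0 < r) (ht : 0 < t) :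
    d2 (d2 (scaledVel u)) (r, t) - d1 (d1 (scaledVel u)) (r, t)
      = -(p * |d2 (prof u) (r, t)| ^ (p - 1)) * d2 (scaledVel u) (r, t) := by
  set F := prof u
  have hF : ContDiff ℝ 3 F := hu.prof
  have hFt : ContDiff ℝ 2 (d2 F) := hF.d2 le_rfl
  have hFr : ContDiff ℝ 2 (d1 F) := hF.d1 le_rfl
  have dFt : Differentiable ℝ (d2 F) := hFt.differentiable two_ne_zero
  have dFtt : Differentiable ℝ (d2 (d2 F)) := (hFt.d2 le_rfl).differentiable one_ne_zero
  have dFrt : Differentiable ℝ (d1 (d2 F)) := (hFt.d1 le_rfl).differentiable one_ne_zero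
  have dFr : Differentiable ℝ (d1 F) := hFr.differentiable two_ne_zero
  have dFrr : Differentiable ℝ (d1 (d1 F)) := (hFr.d1 le_rfl).differentiable one_ne_zero
  have hFttt : d2 (d2 (d2 F)) (r, t) = d2 (d1 (d1 F)) (r, t) + 2 / r * d2 (d1 F) (r, t)
      - p * |d2 F (r, t)| ^ (p - 1) * d2 (d2 F) (r, t) := by
    have hrhs := ((hasDerivAt_d2 (dFrr (r, t))).add
      ((hasDerivAt_d2 (dFr (r, t))).const_mul (2 / r))).sub
      ((hasDerivAt_abs_rpow_mul_self hp _).comp t (hasDerivAt_d2 (dFt (r, t))))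
    refine ((hasDerivAt_d2 (dFtt (r, t))).unique (hrhs.congr_of_eventuallyEq ?_)).trans (by ring)
    filter_upwards [eventually_gt_nhds ht] with τ hτ
    exact hsol.prof_eq (hu.of_le (by norm_num)) hrad hr hτ.le
  have hu2 : ContDiff ℝ 2 u := hu.of_le (by norm_num)
  rw [funext (d2_scaledVel hu2), funext (d1_scaledVel hu2), d2_fst_mul (dFtt _),
    d1_add (h := fun z => z.1 * d1 (d2 F) z) (dFt _) (differentiableAt_fst.mul (dFrt _)),
    d1_fst_mul (dFrt _), hFttt, ← d1_d2_comm hFr, ← d1_d2_comm (hF.of_le (by norm_num)),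
    d1_d2_comm (hF.of_le (by norm_num))]
  field_simp
  ring

theorem reflParity_scaledVel (hu : ContDiff ℝ 3 u) (hrad : RadialIn u) :
    ReflParity (-1) (scaledVel u) := fun r t ht => by
  have hFt := (reflParity_prof hrad).d2 (hu.prof.differentiable (by norm_num)) r t ht
  simp only [scaledVel, hFt]
  ring

theorem Xplus_neg (hu : ContDiff ℝ 3 u) (hrad : RadialIn u) {t : ℝ} (ht : 0 ≤ t) (r : ℝ) :
    Xplus u (-r, t) = -Xminus u (r, t) := by
  have hW := reflParity_scaledVel hu hrad
  have hWd := hu.scaledVel.differentiable two_ne_zero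
  change d2 (scaledVel u) (-r, t) + d1 (scaledVel u) (-r, t)
    = -(d2 (scaledVel u) (r, t) - d1 (scaledVel u) (r, t))
  rw [hW.d2 hWd r t ht, hW.d1 hWd r t ht]
  ring

/-- The odd extension of `w` to `r < 0` still solves the damped wave equation, and at `r = 0`
both sides vanish by oddness. -/
theorem SolvesDampedWave.scaledVel_wave (hsol : SolvesDampedWave p u) (hp : 3 ≤ p)
    (hu : ContDiff ℝ 3 u) (hrad : RadialIn u) {t : ℝ} (ht : 0 < t) (r : ℝ) :
    d2 (d2 (scaledVel u)) (r, t) - d1 (d1 (scaledVel u)) (r, t)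
      = -(p * |d2 (prof u) (r, t)| ^ (p - 1)) * d2 (scaledVel u) (r, t) := by
  have hW := reflParity_scaledVel hu hrad
  have hWd : Differentiable ℝ (scaledVel u) := hu.scaledVel.differentiable two_ne_zero
  have hWt : ReflParity (-1) (d2 (scaledVel u)) := hW.d2 hWd
  have hWr : ReflParity 1 (d1 (scaledVel u)) := neg_neg (1 : ℝ) ▸ hW.d1 hWd
  have hWtt : ReflParity (-1) (d2 (d2 (scaledVel u))) :=
    hWt.d2 ((hu.scaledVel.d2 le_rfl).differentiable one_ne_zero)
  have hWrr : ReflParity (-1) (d1 (d1 (scaledVel u))) :=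
    hWr.d1 ((hu.scaledVel.d1 le_rfl).differentiable one_ne_zero)
  have hFt := (reflParity_prof hrad).d2 (hu.prof.differentiable (by norm_num))
  rcases lt_trichotomy r 0 with hr | rfl | hr
  · obtain ⟨ρ, hρ, rfl⟩ : ∃ ρ, 0 < ρ ∧ r = -ρ := ⟨-r, neg_pos.2 hr, (neg_neg r).symm⟩
    rw [hWtt ρ t ht.le, hWrr ρ t ht.le, hWt ρ t ht.le, hFt ρ t ht.le, one_mul]
    linear_combination -hsol.scaledVel_wave_of_pos hp hu hrad hρ ht
  · rw [hWtt.apply_zero ht.le, hWrr.apply_zero ht.le, hWt.apply_zero ht.le]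
    ring
  · exact hsol.scaledVel_wave_of_pos hp hu hrad hr ht

/-- Since `X₊(-r, t) = -X₋(r, t)`, the right side is `-p |∂ₜf|^(p-1) ∂ₜw`. -/
theorem SolvesDampedWave.transport (hsol : SolvesDampedWave p u) (hp : 3 ≤ p)
    (hu : ContDiff ℝ 3 u) (hrad : RadialIn u) {t : ℝ} (ht : 0 < t) (r : ℝ) :
    d2 (Xplus u) (r, t) - d1 (Xplus u) (r, t)
      = -(p * |d2 (prof u) (r, t)| ^ (p - 1) / 2 * (Xplus u (r, t) - Xplus u (-r, t))) := by
  have hW := reflParity_scaledVel hu hrad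
  have hWd : Differentiable ℝ (scaledVel u) := hu.scaledVel.differentiable two_ne_zero
  have hX : Xplus u = fun z => d2 (scaledVel u) z + d1 (scaledVel u) z := rfl
  rw [hX, d2_sub_d1_of_d2_add_d1 hu.scaledVel, hsol.scaledVel_wave hp hu hrad ht r]
  beta_reduce
  rw [hW.d2 hWd r t ht.le, hW.d1 hWd r t ht.le]
  ring

theorem SpatialCptSupp.vanishesOutside_Xplus_Xminus (hsupp : SpatialCptSupp u)
    (hu : ContDiff ℝ 3 u) {T : ℝ} (hT : 0 < T) :
    ∃ R, VanishesOutside R T (Xplus u) ∧ VanishesOutside R T (Xminus u) := by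
  obtain ⟨R, -, hR⟩ := hsupp T hT
  have hF : VanishesOutside R T (prof u) := fun r t hr ht =>
    hR _ _ (by rw [norm_smul_e1]; exact hr.le) ht.1 ht.2.le
  have hW : VanishesOutside R T (scaledVel u) := fun r t hr ht => by
    simp only [scaledVel, hF.d2 (hu.prof.differentiable (by norm_num)) r t hr ht, mul_zero]
  have hWd : Differentiable ℝ (scaledVel u) := hu.scaledVel.differentiable two_ne_zero
  refine ⟨R, fun r t hr ht => ?_, fun r t hr ht => ?_⟩
  · change d2 (scaledVel u) (r, t) + d1 (scaledVel u) (r, t) = 0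
    rw [hW.d2 hWd r t hr ht, hW.d1 hWd r t hr ht, add_zero]
  · change d2 (scaledVel u) (r, t) - d1 (scaledVel u) (r, t) = 0
    rw [hW.d2 hWd r t hr ht, hW.d1 hWd r t hr ht, sub_zero]

theorem ContDiff.Xplus (hu : ContDiff ℝ 3 u) : ContDiff ℝ 1 (Xplus u) :=
  (hu.scaledVel.d2 le_rfl).add (hu.scaledVel.d1 le_rfl)

theorem ContDiff.Xminus (hu : ContDiff ℝ 3 u) : ContDiff ℝ 1 (Xminus u) :=
  (hu.scaledVel.d2 le_rfl).sub (hu.scaledVel.d1 le_rfl)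

theorem abs_Xplus_zero_le (hu : ContDiff ℝ 3 u) (hrad : RadialIn u) (hsupp : SpatialCptSupp u)
    {M : ℝ} (hM : M = max (⨆ r : Ioi (0 : ℝ), |Xplus u ((r : ℝ), 0)|)
        (⨆ r : Ioi (0 : ℝ), |Xminus u ((r : ℝ), 0)|)) (r : ℝ) :
    |Xplus u (r, 0)| ≤ M := by
  obtain ⟨R, hvanP, hvanM⟩ := hsupp.vanishesOutside_Xplus_Xminus hu one_pos
  have hpos : ∀ ρ : ℝ, 0 < ρ → |Xplus u (ρ, 0)| ≤ M := fun ρ hρ => hM ▸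
    (le_ciSup (hvanP.bddAbove_range_abs one_pos hu.Xplus.continuous) ⟨ρ, hρ⟩).trans
      (le_max_left _ _)
  rcases lt_trichotomy r 0 with hr | rfl | hr
  · rw [← neg_neg r, Xplus_neg hu hrad le_rfl, abs_neg]
    exact hM ▸ (le_ciSup (hvanM.bddAbove_range_abs one_pos hu.Xminus.continuous)
      ⟨-r, neg_pos.2 hr⟩).trans (le_max_right _ _)
  · have hcont : Continuous fun ρ : ℝ => |Xplus u (ρ, 0)| :=
      (hu.Xplus.continuous.comp (continuous_id.prodMk continuous_const)).abs
    refine le_of_tendsto (x := 𝓝[>] (0 : ℝ)) ((hcont.tendsto 0).mono_left nhdsWithin_le_nhds) ?_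
    filter_upwards [self_mem_nhdsWithin] with ρ hρ using hpos ρ hρ
  · exact hpos r hr

theorem SolvesDampedWave.abs_Xplus_le (hsol : SolvesDampedWave p u) (hp : 3 ≤ p)
    (hu : ContDiff ℝ 3 u) (hrad : RadialIn u) (hsupp : SpatialCptSupp u) {M : ℝ}
    (hM : M = max (⨆ r : Ioi (0 : ℝ), |Xplus u ((r : ℝ), 0)|)
        (⨆ r : Ioi (0 : ℝ), |Xminus u ((r : ℝ), 0)|)) {r t : ℝ} (ht : 0 ≤ t) :
    |Xplus u (r, t)| ≤ M := by
  obtain ⟨R, hvan, -⟩ := hsupp.vanishesOutside_Xplus_Xminus hu (T := t + 1) (by linarith)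
  have hb : Continuous fun z => p * |d2 (prof u) z| ^ (p - 1) / 2 :=
    (continuous_const.mul ((hu.prof.d2 (m := 2) le_rfl).continuous.abs.rpow_const
      fun _ => Or.inr (by linarith))).div_const 2
  exact abs_le_of_transport hu.Xplus hb (fun z => by positivity) hvan
    (fun r t ht => hsol.transport hp hu hrad ht.1 r) (abs_Xplus_zero_le hu hrad hsupp hM)
    ⟨ht, lt_add_one t⟩

theorem SolvesDampedWave.abs_Xminus_le (hsol : SolvesDampedWave p u) (hp : 3 ≤ p)
    (hu : ContDiff ℝ 3 u) (hrad : RadialIn u) (hsupp : SpatialCptSupp u) {M : ℝ}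
    (hM : M = max (⨆ r : Ioi (0 : ℝ), |Xplus u ((r : ℝ), 0)|)
        (⨆ r : Ioi (0 : ℝ), |Xminus u ((r : ℝ), 0)|)) {r t : ℝ} (ht : 0 ≤ t) :
    |Xminus u (r, t)| ≤ M := by
  rw [← abs_neg, ← Xplus_neg hu hrad ht]
  exact hsol.abs_Xplus_le hp hu hrad hsupp hM ht

theorem abs_d2_d1_scaledVel_le {M : ℝ} {z : ℝ × ℝ} (hplus : |Xplus u z| ≤ M)
    (hminus : |Xminus u z| ≤ M) : |d2 (scaledVel u) z| ≤ M ∧ |d1 (scaledVel u) z| ≤ M := by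
  obtain ⟨hP1, hP2⟩ : -M ≤ d2 (scaledVel u) z + d1 (scaledVel u) z
      ∧ d2 (scaledVel u) z + d1 (scaledVel u) z ≤ M := abs_le.1 hplus
  obtain ⟨hM1, hM2⟩ : -M ≤ d2 (scaledVel u) z - d1 (scaledVel u) z
      ∧ d2 (scaledVel u) z - d1 (scaledVel u) z ≤ M := abs_le.1 hminus
  exact ⟨abs_le.2 ⟨by linarith, by linarith⟩, abs_le.2 ⟨by linarith, by linarith⟩⟩

end DampedWave

/-- pointwise bounds `r|∂ₜ²f| ≤ M`, `|∂ₜf| ≤ M`, `r|∂ᵣ∂ₜf| ≤ 2M` with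
`M = max(sup_r |X₊(·,0)|, sup_r |X₋(·,0)|)`. -/
theorem pointwise_bounds_from_X
    (p : ℝ) (hp : 3 ≤ p)
    (u : E3 × ℝ → ℝ) (hu : ContDiff ℝ 3 u)
    (heq : ∀ (x : E3) (t : ℝ), 0 ≤ t →
      pt (pt u) (x, t) - lap u (x, t) + |pt u (x, t)| ^ (p - 1) * pt u (x, t) = 0)
    (hrad : RadialIn u) (hsupp : SpatialCptSupp u)
    (M : ℝ)
    (hM : M = max (⨆ r : Ioi (0 : ℝ), |Xplus u ((r : ℝ), 0)|)
        (⨆ r : Ioi (0 : ℝ), |Xminus u ((r : ℝ), 0)|)) :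
    ∀ (r t : ℝ), 0 < r → 0 ≤ t →
      r * |d2 (d2 (prof u)) (r, t)| ≤ M ∧
      |d2 (prof u) (r, t)| ≤ M ∧
      r * |d1 (d2 (prof u)) (r, t)| ≤ 2 * M := by
  intro r t hr ht
  have hsol : SolvesDampedWave p u := heq
  have hu2 : ContDiff ℝ 2 u := hu.of_le (by norm_num)
  have hW : ∀ ρ, |d2 (scaledVel u) (ρ, t)| ≤ M ∧ |d1 (scaledVel u) (ρ, t)| ≤ M := fun ρ =>
    abs_d2_d1_scaledVel_le (hsol.abs_Xplus_le hp hu hrad hsupp hM ht)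
      (hsol.abs_Xminus_le hp hu hrad hsupp hM ht)
  have hvel : |d2 (prof u) (r, t)| ≤ M := by
    have hw := abs_le_mul_of_abs_d1_le (hu.scaledVel.differentiable two_ne_zero) hr.le
      (by simp [scaledVel]) fun ρ => (hW ρ).2
    simp only [scaledVel, abs_mul, abs_of_pos hr, mul_comm M] at hw
    exact le_of_mul_le_mul_left hw hr
  refine ⟨?_, hvel, ?_⟩
  · simpa [d2_scaledVel hu2, abs_mul, abs_of_pos hr] using (hW r).1
  · have hd1 := (hW r).2
    rw [d1_scaledVel hu2] at hd1
    calc r * |d1 (d2 (prof u)) (r, t)| = |(d2 (prof u) (r, t) + r * d1 (d2 (prof u)) (r, t))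
          - d2 (prof u) (r, t)| := by rw [add_sub_cancel_left, abs_mul, abs_of_pos hr]
      _ ≤ 2 * M := (abs_sub _ _).trans (by linarith)
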